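/- Let f_r : {(x,u) ∈ ℝ^4 × ℝ^2 : x^4 ≠ −1} → ℝ^4 be the reduced system f_r(x,u) = ( (−x^2(u^2+1)+u^1(x^4+1))/(x^4+1), x^4(u^2+1), −x^1+x^4−1, u^2 ). Then: (i) the functions x^4 and x^4 − x^1 factor through f_r independently of the inputs, via the identities f_r^2(x,u) = x^4 · ( f_r^4(x,u) + 1 ) and f_r^3(x,u) = (x^4 − x^1) − 1; and (ii) for every smooth γ : ℝ^4 → ℝ, if the composite γ ∘ f_r is independent of the inputs (u^1, u^2) on an open subset of the domain, then γ ∘ f_r is also independent of x^2 and of x^3 there, i.e., its differential lies in span(dx^1, dx^4). -/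

import Mathlib

/-- The reduced system `f_r (x, u) = ((−x²(u²+1)+u¹(x⁴+1))/(x⁴+1), x⁴(u²+1), −x¹+x⁴−1, u²)`
(indices shifted down by one), defined on `{(x, u) : x⁴ ≠ −1}`. -/
noncomputable def reducedSystem : (Fin 4 → ℝ) × (Fin 2 → ℝ) → Fin 4 → ℝ := fun p =>
  ![(-(p.1 1) * (p.2 1 + 1) + p.2 0 * (p.1 3 + 1)) / (p.1 3 + 1),
    p.1 3 * (p.2 1 + 1),
    -(p.1 0) + p.1 3 - 1,
    p.2 1]

/-- The coordinate one-form `dx¹` on `ℝ⁴ × ℝ²`. -/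
noncomputable def dxOne : ((Fin 4 → ℝ) × (Fin 2 → ℝ)) →L[ℝ] ℝ :=
  (ContinuousLinearMap.proj (0 : Fin 4)).comp
    (ContinuousLinearMap.fst ℝ (Fin 4 → ℝ) (Fin 2 → ℝ))

/-- The coordinate one-form `dx⁴` on `ℝ⁴ × ℝ²`. -/
noncomputable def dxFour : ((Fin 4 → ℝ) × (Fin 2 → ℝ)) →L[ℝ] ℝ :=
  (ContinuousLinearMap.proj (3 : Fin 4)).comp
    (ContinuousLinearMap.fst ℝ (Fin 4 → ℝ) (Fin 2 → ℝ))

/-! Moving `x²` by `t` changes `f_r` exactly as moving the input `u¹` by `−t (u²+1)/(x⁴+1)`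
does, and `x³` does not enter `f_r` at all. So the derivative of `γ ∘ f_r` along `x²` is a multiple
of its derivative along `u¹`, and along `x³` it is zero; once the input derivatives vanish, only
`dx¹` and `dx⁴` are left in the differential. -/

theorem HasFDerivAt.apply_eq_of_eq_along_lines {𝕜 E F : Type*} [NontriviallyNormedField 𝕜]
    [NormedAddCommGroup E] [NormedSpace 𝕜 E] [NormedAddCommGroup F] [NormedSpace 𝕜 F]
    {g : E → F} {L : E →L[𝕜] F} {p v w : E} (hg : HasFDerivAt g L p)
    (h : ∀ t : 𝕜, g (p + t • v) = g (p + t • w)) : L v = L w :=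
  (hg.hasLineDerivAt v).unique <| by
    simpa only [HasLineDerivAt, h] using hg.hasLineDerivAt w

section ReducedSystem

local notation "𝕏" => (Fin 4 → ℝ) × (Fin 2 → ℝ)

theorem differentiableAt_reducedSystem {p : 𝕏} (hp : p.1 3 ≠ -1) :
    DifferentiableAt ℝ reducedSystem p := by
  have hden : p.1 3 + 1 ≠ 0 := fun h => hp (by linarith)
  refine differentiableAt_pi.mpr fun i => ?_
  fin_cases i <;> simp [reducedSystem] <;> fun_prop (disch := exact hden)

theorem reducedSystem_add_smul_x₂ {p : 𝕏} (hp : p.1 3 ≠ -1) (t : ℝ) :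
    reducedSystem (p + t • (![0, 1, 0, 0], 0)) =
      reducedSystem (p + t • ((-(p.2 1 + 1) / (p.1 3 + 1)) • ((0 : Fin 4 → ℝ), ![1, 0]))) := by
  have hden : p.1 3 + 1 ≠ 0 := fun h => hp (by linarith)
  funext i
  fin_cases i <;> simp [reducedSystem]
  field_simp
  ring

theorem reducedSystem_add_smul_x₃ (p : 𝕏) (t : ℝ) :
    reducedSystem (p + t • (![0, 0, 1, 0], 0)) = reducedSystem p := by
  funext i
  fin_cases i <;> simp [reducedSystem]

theorem mem_span_dxOne_dxFour {L : 𝕏 →L[ℝ] ℝ}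
    (hx₂ : L (![0, 1, 0, 0], 0) = 0) (hx₃ : L (![0, 0, 1, 0], 0) = 0)
    (hu₁ : L (0, ![1, 0]) = 0) (hu₂ : L (0, ![0, 1]) = 0) :
    L ∈ Submodule.span ℝ {dxOne, dxFour} := by
  have hL : L = L (![1, 0, 0, 0], 0) • dxOne + L (![0, 0, 0, 1], 0) • dxFour := by
    refine ContinuousLinearMap.ext fun v => ?_
    have hv : v = v.1 0 • (![1, 0, 0, 0], 0) + v.1 1 • (![0, 1, 0, 0], 0)
        + v.1 2 • (![0, 0, 1, 0], 0) + v.1 3 • (![0, 0, 0, 1], 0)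
        + v.2 0 • (0, ![1, 0]) + v.2 1 • (0, ![0, 1]) := by
      ext i <;> fin_cases i <;> simp
    conv_lhs => rw [hv]
    simp only [map_add, map_smul, smul_eq_mul, hx₂, hx₃, hu₁, hu₂, mul_zero, add_zero]
    simp [dxOne, dxFour, mul_comm]
  rw [hL]
  exact Submodule.add_mem _ (Submodule.smul_mem _ _ (Submodule.subset_span (by simp)))
    (Submodule.smul_mem _ _ (Submodule.subset_span (by simp)))

end ReducedSystem

/-- (i) The functions `x⁴` and `x⁴ − x¹` factor through `f_r` independently of the inputs, via
`f_r² = x⁴ (f_r⁴ + 1)` and `f_r³ = (x⁴ − x¹) − 1`; and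
(ii) for every smooth `γ : ℝ⁴ → ℝ`, if `γ ∘ f_r` is independent of the inputs `(u¹, u²)` on
an open subset of the domain, then there it is also independent of `x²` and of `x³`, i.e.
its differential lies in `span (dx¹, dx⁴)`. -/
theorem reducedSystem_largest_codistribution :
    (∀ p : (Fin 4 → ℝ) × (Fin 2 → ℝ), p.1 3 ≠ -1 →
      reducedSystem p 1 = p.1 3 * (reducedSystem p 3 + 1) ∧
      reducedSystem p 2 = (p.1 3 - p.1 0) - 1) ∧
    (∀ γ : (Fin 4 → ℝ) → ℝ, ContDiff ℝ (⊤ : ℕ∞) γ →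
      ∀ O : Set ((Fin 4 → ℝ) × (Fin 2 → ℝ)), IsOpen O →
        O ⊆ {p : (Fin 4 → ℝ) × (Fin 2 → ℝ) | p.1 3 ≠ -1} →
        (∀ p ∈ O,
          fderiv ℝ (fun q => γ (reducedSystem q)) p ((0 : Fin 4 → ℝ), ![1, 0]) = 0 ∧
          fderiv ℝ (fun q => γ (reducedSystem q)) p ((0 : Fin 4 → ℝ), ![0, 1]) = 0) →
        ∀ p ∈ O,
          fderiv ℝ (fun q => γ (reducedSystem q)) p (![0, 1, 0, 0], (0 : Fin 2 → ℝ)) = 0 ∧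
          fderiv ℝ (fun q => γ (reducedSystem q)) p (![0, 0, 1, 0], (0 : Fin 2 → ℝ)) = 0 ∧
          fderiv ℝ (fun q => γ (reducedSystem q)) p ∈ Submodule.span ℝ {dxOne, dxFour}) := by
  refine ⟨fun p _ => ⟨by simp [reducedSystem], by simp [reducedSystem]; ring⟩, ?_⟩
  intro γ hγ O _ hOdom hinputs p hp
  obtain ⟨hu₁, hu₂⟩ := hinputs p hp
  have hdom : p.1 3 ≠ -1 := hOdom hp
  have hg : HasFDerivAt (fun q => γ (reducedSystem q))
      (fderiv ℝ (fun q => γ (reducedSystem q)) p) p :=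
    ((hγ.differentiable (by simp) _).comp p (differentiableAt_reducedSystem hdom)).hasFDerivAt
  have hx₂ : fderiv ℝ (fun q => γ (reducedSystem q)) p (![0, 1, 0, 0], 0) = 0 := by
    rw [hg.apply_eq_of_eq_along_lines fun t => congrArg γ (reducedSystem_add_smul_x₂ hdom t),
      map_smul, hu₁, smul_zero]
  have hx₃ : fderiv ℝ (fun q => γ (reducedSystem q)) p (![0, 0, 1, 0], 0) = 0 := by
    rw [hg.apply_eq_of_eq_along_lines (w := 0) fun t => by
      rw [reducedSystem_add_smul_x₃, smul_zero, add_zero], map_zero]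
  exact ⟨hx₂, hx₃, mem_span_dxOne_dxFour hx₂ hx₃ hu₁ hu₂⟩
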